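/- Let s > 0, 0 < x < 1/3, and let ω = √((1/2)(-x² + √(x⁴ + 4s²(1-3x)(1-x)))) > 0. Then h₁(ω,x) := (ω/s)·(s(1-x) + x(1-2x) - ω²)/((1-2x)² + ω²) > 0; equivalently, s(1-x) + x(1-2x) > ω². -/
import Mathlib


/-- h₁(ω, x) > 0 for 0 < x < 1/3 and ω = ω₊; equivalently
s(1-x) + x(1-2x) > ω². -/
theorem stmt12 (s x ω : ℝ) (hs : 0 < s) (hx0 : 0 < x) (hx : x < 1 / 3)
    (hω : ω = Real.sqrt ((1 / 2) * (-x ^ 2 +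
        Real.sqrt (x ^ 4 + 4 * s ^ 2 * (1 - 3 * x) * (1 - x))))) :
    0 < (ω / s) * (s * (1 - x) + x * (1 - 2 * x) - ω ^ 2) /
        ((1 - 2 * x) ^ 2 + ω ^ 2) ∧
    ω ^ 2 < s * (1 - x) + x * (1 - 2 * x) := by
  set D : ℝ := x ^ 4 + 4 * s ^ 2 * (1 - 3 * x) * (1 - x) with hD
  have h3x : 0 < 1 - 3 * x := by linarith
  have h1x : 0 < 1 - x := by linarith
  have hDpos : x ^ 4 < D := by nlinarith [mul_pos (mul_pos (pow_pos hs 2) h3x) h1x]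
  have hD0 : (0:ℝ) ≤ D := by nlinarith [pow_pos hx0 4]
  have hsqD : x ^ 2 < Real.sqrt D := by
    rw [show x ^ 2 = Real.sqrt ((x^2)^2) by rw [Real.sqrt_sq (sq_nonneg x)]]
    apply Real.sqrt_lt_sqrt (sq_nonneg _)
    nlinarith
  have hinner : 0 < (1 / 2) * (-x ^ 2 + Real.sqrt D) := by linarith
  have hω2 : ω ^ 2 = (1 / 2) * (-x ^ 2 + Real.sqrt D) := by
    rw [hω, Real.sq_sqrt hinner.le]
  have hωpos : 0 < ω := by
    rw [hω]; exact Real.sqrt_pos.mpr hinner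
  have hkey : ω ^ 2 < s * (1 - x) + x * (1 - 2 * x) := by
    have h2 : Real.sqrt D < 2 * s * (1 - x) + 2 * x - 3 * x ^ 2 := by
      have hrhs : 0 < 2 * s * (1 - x) + 2 * x - 3 * x ^ 2 := by nlinarith
      rw [show Real.sqrt D < 2 * s * (1 - x) + 2 * x - 3 * x ^ 2 ↔
          D < (2 * s * (1 - x) + 2 * x - 3 * x ^ 2) ^ 2 from
        Real.sqrt_lt' hrhs]
      nlinarith [mul_pos hs hx0, mul_pos (mul_pos hs hx0) h1x,
        mul_pos (mul_pos hs hs) (mul_pos hx0 h1x),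
        mul_pos (mul_pos hx0 hx0) (mul_pos h1x (by linarith : (0:ℝ) < 1 - 2*x))]
    nlinarith
  refine ⟨?_, hkey⟩
  apply div_pos
  · apply mul_pos (div_pos hωpos hs); linarith
  · positivity
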